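/- Let ω>0 and let χ∈C_c^∞(ℝ;ℝ) satisfy χ(η)=1 for |η|≤1/2 and χ(η)=0 for |η|≥1. For l∈{1,2,3} define m_l:ℝ³×ℝ→ℂ by m_l(ξ,η) := (1−χ(η/ω))·(iη)^{1/2}·ξ_l / (|ξ|²+iη), where (iη)^{1/2} is the principal branch of the square root. Then m_l is a well-defined C^∞ function on ℝ³×ℝ, m_l is bounded, and m_l satisfies the Marcinkiewicz multiplier condition: sup over all ε=(ε₁,ε₂,ε₃,ε₄)∈{0,1}⁴ and all (ξ,η)∈ℝ³×ℝ of |ξ₁^{ε₁}ξ₂^{ε₂}ξ₃^{ε₃}η^{ε₄} ∂_{ξ₁}^{ε₁}∂_{ξ₂}^{ε₂}∂_{ξ₃}^{ε₃}∂_η^{ε₄} m_l(ξ,η)| is finite. -/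

import Mathlib

open MeasureTheory ENNReal

noncomputable section

abbrev E3 : Type := Fin 3 → ℝ
abbrev ST3 : Type := E3 × ℝ

/-- The `i`-th spatial unit vector. -/
def e3 (i : Fin 3) : E3 := Pi.single i 1

/-- Directional derivative of a scalar function on space-time. -/
def dd (v : ST3) (φ : ST3 → ℝ) : ST3 → ℝ := fun p => fderiv ℝ φ p v

/-- Spatial partial derivative of a space-time scalar function. -/
def ddx (i : Fin 3) : (ST3 → ℝ) → ST3 → ℝ := dd (e3 i, 0)

/-- Time partial derivative of a space-time scalar function. -/
def ddt : (ST3 → ℝ) → ST3 → ℝ := dd (0, 1)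

def sing (i : Fin 3) : Fin 3 → ℕ := Pi.single i 1

/-- degree of a spatial multi-index -/
def deg (α : Fin 3 → ℕ) : ℕ := α 0 + α 1 + α 2

/-- Iterated derivative `∂_x^α ∂_t^κ` of a space-time scalar function. -/
def ddMulti (α : Fin 3 → ℕ) (κ : ℕ) (φ : ST3 → ℝ) : ST3 → ℝ :=
  (ddx 0)^[α 0] <| (ddx 1)^[α 1] <| (ddx 2)^[α 2] <| ddt^[κ] φ

/-- smooth compactly supported scalar test function on space-time -/
def IsTest (φ : ST3 → ℝ) : Prop := ContDiff ℝ (⊤ : ℕ∞) φ ∧ HasCompactSupport φ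

/-- smooth compactly supported vector test field on space-time -/
def IsTestV (Φ : ST3 → E3) : Prop := ContDiff ℝ (⊤ : ℕ∞) Φ ∧ HasCompactSupport Φ

/-- `g = ∂_x^α ∂_t^κ u` in the weak (distributional) sense on `ℝ³×ℝ`. -/
def IsWeakDeriv (α : Fin 3 → ℕ) (κ : ℕ) (u g : ST3 → ℝ) : Prop :=
  ∀ φ : ST3 → ℝ, IsTest φ →
    ∫ p : ST3, u p * ddMulti α κ φ p = (-1 : ℝ) ^ (deg α + κ) * ∫ p : ST3, g p * φ p

/-- Directional derivative of a scalar function on `ℝ³`. -/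
def dd3 (v : E3) (φ : E3 → ℝ) : E3 → ℝ := fun x => fderiv ℝ φ x v

def ddx3 (i : Fin 3) : (E3 → ℝ) → E3 → ℝ := dd3 (e3 i)

def ddMulti3 (α : Fin 3 → ℕ) (φ : E3 → ℝ) : E3 → ℝ :=
  (ddx3 0)^[α 0] <| (ddx3 1)^[α 1] <| (ddx3 2)^[α 2] φ

def IsTest3 (φ : E3 → ℝ) : Prop := ContDiff ℝ (⊤ : ℕ∞) φ ∧ HasCompactSupport φ

/-- `g = ∂_x^α u` in the weak sense on `ℝ³`. -/
def IsWeakDeriv3 (α : Fin 3 → ℕ) (u g : E3 → ℝ) : Prop :=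
  ∀ φ : E3 → ℝ, IsTest3 φ →
    ∫ x : E3, u x * ddMulti3 α φ x = (-1 : ℝ) ^ (deg α) * ∫ x : E3, g x * φ x

/-- `u` is `T`-time-periodic (vector valued). -/
def PeriodicST (T : ℝ) (u : ST3 → E3) : Prop := ∀ x : E3, ∀ t : ℝ, u (x, t + T) = u (x, t)

/-- `u` is `T`-time-periodic (scalar valued). -/
def PeriodicSTR (T : ℝ) (u : ST3 → ℝ) : Prop := ∀ x : E3, ∀ t : ℝ, u (x, t + T) = u (x, t)

/-- the space-time slab `ℝ³ × (0,T)` -/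
def PerSet (T : ℝ) : Set ST3 := (Set.univ : Set E3) ×ˢ Set.Ioo 0 T

/-- Lebesgue measure restricted to `ℝ³ × (0,T)` -/
def μT (T : ℝ) : Measure ST3 := volume.restrict (PerSet T)

/-- `L^s`-norm on `ℝ³×(0,T)` -/
def nst {F : Type*} [NormedAddCommGroup F] (T s : ℝ) (f : ST3 → F) : ℝ≥0∞ :=
  eLpNorm f (ENNReal.ofReal s) (μT T)

/-- `L^s`-norm on `ℝ³` -/
def n3 {F : Type*} [NormedAddCommGroup F] (s : ℝ) (f : E3 → F) : ℝ≥0∞ :=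
  eLpNorm f (ENNReal.ofReal s) (volume : Measure E3)

/-- weakly divergence free (space-time field, spatial divergence) -/
def DivFreeST (u : ST3 → E3) : Prop :=
  ∀ φ : ST3 → ℝ, IsTest φ → ∫ p : ST3, ∑ i, u p i * ddx i φ p = 0

/-- weakly divergence free on `ℝ³` -/
def DivFree3 (v : E3 → E3) : Prop :=
  ∀ φ : E3 → ℝ, IsTest3 φ → ∫ x : E3, ∑ i, v x i * ddx3 i φ x = 0

/-- the time average `(Pu)(x) = (1/T)∫₀ᵀ u(x,s) ds` -/
def timeAvg (T : ℝ) (u : ST3 → E3) : E3 → E3 :=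
  fun x => T⁻¹ • ∫ t in Set.Ioo (0 : ℝ) T, u (x, t)

/-- `Pu = 0` a.e. -/
def ZeroTimeAvg (T : ℝ) (u : ST3 → E3) : Prop :=
  ∀ᵐ x ∂(volume : Measure E3), timeAvg T u x = 0

/-- the norm of the space `X^q_Oseen(ℝ³)`; `g` is the weak gradient (`g x i j = ∂_j v_i`) and
`h` the weak second gradient of `v`. -/
def OseenNorm (lam q : ℝ) (v : E3 → E3) (g : E3 → Fin 3 → Fin 3 → ℝ)
    (h : E3 → Fin 3 → Fin 3 → Fin 3 → ℝ) : ℝ≥0∞ :=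
  ENNReal.ofReal (|lam| ^ ((1 : ℝ) / 2)) * n3 (2 * q / (2 - q)) v
    + ENNReal.ofReal (|lam| ^ ((1 : ℝ) / 4)) * n3 (4 * q / (4 - q)) g
    + ENNReal.ofReal |lam| * n3 q (fun x => fun i => g x i 0)
    + n3 q h

/-- membership of `v` in `X^q_Oseen(ℝ³)`, with weak derivative witnesses `g`, `h`. -/
structure IsOseen (lam q : ℝ) (v : E3 → E3) (g : E3 → Fin 3 → Fin 3 → ℝ)
    (h : E3 → Fin 3 → Fin 3 → Fin 3 → ℝ) : Prop where
  locint : LocallyIntegrable v (volume : Measure E3)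
  divfree : DivFree3 v
  grad : ∀ i j, IsWeakDeriv3 (sing j) (fun x => v x i) (fun x => g x i j)
  grad2 : ∀ i j k, IsWeakDeriv3 (sing j + sing k) (fun x => v x i) (fun x => h x i j k)
  fin : OseenNorm lam q v g h < ⊤

/-- the norm of `X^{q,r}_Oseen(ℝ³)` -/
def OseenNormQR (lam q r : ℝ) (v : E3 → E3) (g : E3 → Fin 3 → Fin 3 → ℝ)
    (h : E3 → Fin 3 → Fin 3 → Fin 3 → ℝ) : ℝ≥0∞ :=
  OseenNorm lam q v g h + n3 r h

/-- membership of `v` in `X^{q,r}_Oseen(ℝ³)` -/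
structure IsOseenQR (lam q r : ℝ) (v : E3 → E3) (g : E3 → Fin 3 → Fin 3 → ℝ)
    (h : E3 → Fin 3 → Fin 3 → Fin 3 → ℝ) : Prop where
  base : IsOseen lam q v g h
  finr : n3 r h < ⊤

/-- the norm `‖w‖_{2,1,q}` of the anisotropic space `W^{2,1}_q(ℝ³×(0,T))`; `wt` is the weak
time derivative, `g`/`h` the weak spatial gradient/second gradient of `w`. -/
def W21Norm (T q : ℝ) (w wt : ST3 → E3) (g : ST3 → Fin 3 → Fin 3 → ℝ)
    (h : ST3 → Fin 3 → Fin 3 → Fin 3 → ℝ) : ℝ≥0∞ :=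
  (nst T q w ^ q
      + ∑ j : Fin 3, nst T q (fun p => fun i => g p i j) ^ q
      + ∑ j : Fin 3, ∑ k : Fin 3, nst T q (fun p => fun i => h p i j k) ^ q
      + nst T q wt ^ q) ^ ((1 : ℝ) / q)

/-- membership of `w` in `W^{2,1}_q(ℝ³×(0,T))` (T-time-periodic), with witnesses -/
structure IsW21 (T q : ℝ) (w wt : ST3 → E3) (g : ST3 → Fin 3 → Fin 3 → ℝ)
    (h : ST3 → Fin 3 → Fin 3 → Fin 3 → ℝ) : Prop where
  periodic : PeriodicST T w
  locint : LocallyIntegrable w (volume : Measure ST3)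
  grad : ∀ i j, IsWeakDeriv (sing j) 0 (fun p => w p i) (fun p => g p i j)
  grad2 : ∀ i j k, IsWeakDeriv (sing j + sing k) 0 (fun p => w p i) (fun p => h p i j k)
  tderiv : ∀ i, IsWeakDeriv 0 1 (fun p => w p i) (fun p => wt p i)
  fin : W21Norm T q w wt g h < ⊤

/-- the norm `‖w‖_{2,1,q,r}` -/
def W21NormQR (T q r : ℝ) (w wt : ST3 → E3) (g : ST3 → Fin 3 → Fin 3 → ℝ)
    (h : ST3 → Fin 3 → Fin 3 → Fin 3 → ℝ) : ℝ≥0∞ :=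
  W21Norm T q w wt g h + W21Norm T r w wt g h

/-- membership of `w` in `W^{2,1}_{q,σ,⊥}(ℝ³×(0,T))` -/
structure IsW21σperp (T q : ℝ) (w wt : ST3 → E3) (g : ST3 → Fin 3 → Fin 3 → ℝ)
    (h : ST3 → Fin 3 → Fin 3 → Fin 3 → ℝ) : Prop where
  base : IsW21 T q w wt g h
  divfree : DivFreeST w
  avg : ZeroTimeAvg T w

/-- membership of `w` in `W^{2,1}_{q,r,σ,⊥}(ℝ³×(0,T))` -/
structure IsW21QRσperp (T q r : ℝ) (w wt : ST3 → E3) (g : ST3 → Fin 3 → Fin 3 → ℝ)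
    (h : ST3 → Fin 3 → Fin 3 → Fin 3 → ℝ) : Prop where
  baseq : IsW21 T q w wt g h
  baser : IsW21 T r w wt g h
  divfree : DivFreeST w
  avg : ZeroTimeAvg T w

/-- the norm of `X^{q,r}_pres(ℝ³×(0,T))`; `gp` is the weak spatial gradient of `p`. -/
def XpresNorm (T q r : ℝ) (p : ST3 → ℝ) (gp : ST3 → E3) : ℝ≥0∞ :=
  (∫⁻ t in Set.Ioo (0 : ℝ) T,
      (n3 (3 * q / (3 - q)) (fun x => p (x, t)) ^ q + n3 q (fun x => gp (x, t)) ^ q)) ^ ((1 : ℝ) / q)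
    + nst T r gp

/-- membership of `p` in `X^{q,r}_pres(ℝ³×(0,T))` -/
structure IsXpres (T q r : ℝ) (p : ST3 → ℝ) (gp : ST3 → E3) : Prop where
  periodic : PeriodicSTR T p
  locint : LocallyIntegrable p (volume : Measure ST3)
  grad : ∀ i, IsWeakDeriv (sing i) 0 p (fun pt => gp pt i)
  fin : XpresNorm T q r p gp < ⊤

/-- `(u,press)` solves `∂_t u − Δu − λ∂₁u + ∇press + (u·∇)u = f` in the sense of distributions
on `ℝ³×ℝ`; `gu` is the weak spatial gradient of `u`. -/
def NSWeakEq (lam : ℝ) (u : ST3 → E3) (gu : ST3 → Fin 3 → Fin 3 → ℝ)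
    (press : ST3 → ℝ) (f : ST3 → E3) : Prop :=
  ∀ Φ : ST3 → E3, IsTestV Φ →
    ∫ p : ST3, (- (∑ i, u p i * ddt (fun z => Φ z i) p)
        - (∑ i, ∑ j, u p i * ddx j (ddx j (fun z => Φ z i)) p)
        + lam * ∑ i, u p i * ddx 0 (fun z => Φ z i) p
        - press p * ∑ i, ddx i (fun z => Φ z i) p
        + ∑ i, (∑ j, u p j * gu p i j) * Φ p i)
      = ∫ p : ST3, ∑ i, f p i * Φ p i

/-- a strong solution in the class `X^{q,r}_Oseen × W^{2,1}_{q,r,σ,⊥} × X^{q,r}_pres`,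
with `u = v + w`. -/
structure IsStrongSol (T lam q r : ℝ) (f : ST3 → E3)
    (v : E3 → E3) (gv : E3 → Fin 3 → Fin 3 → ℝ) (hv : E3 → Fin 3 → Fin 3 → Fin 3 → ℝ)
    (w wt : ST3 → E3) (gw : ST3 → Fin 3 → Fin 3 → ℝ) (hw : ST3 → Fin 3 → Fin 3 → Fin 3 → ℝ)
    (press : ST3 → ℝ) (gp : ST3 → E3) : Prop where
  oseen : IsOseenQR lam q r v gv hv
  w21 : IsW21QRσperp T q r w wt gw hw
  pres : IsXpres T q r press gp
  eq : NSWeakEq lam (fun p => v p.1 + w p) (fun p => fun i => fun j => gv p.1 i j + gw p i j)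
    press f

/-- a T-time-periodic, divergence-free, smooth test field with compact spatial support -/
def PeriodicTestV (T : ℝ) (Φ : ST3 → E3) : Prop :=
  ContDiff ℝ (⊤ : ℕ∞) Φ ∧ (∀ x t, Φ (x, t + T) = Φ (x, t)) ∧
    (∀ p : ST3, ∑ i, fderiv ℝ (fun z => Φ z i) p (e3 i, 0) = 0) ∧
    (∃ R : ℝ, ∀ x : E3, ∀ t : ℝ, R ≤ ‖x‖ → Φ (x, t) = 0)

/-- physically reasonable weak time-periodic solution, with weak-gradient witness `gub` -/
structure IsPRWeakSol (T lam : ℝ) (f : ST3 → E3) (ub : ST3 → E3)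
    (gub : ST3 → Fin 3 → Fin 3 → ℝ) : Prop where
  periodic : PeriodicST T ub
  locint : LocallyIntegrable ub (volume : Measure ST3)
  grad : ∀ i j, IsWeakDeriv (sing j) 0 (fun p => ub p i) (fun p => gub p i j)
  divfree : DivFreeST ub
  /-- `ū ∈ L²(0,T; D^{1,2}_{0,σ})` (the `L⁶` part) -/
  mem6 : ∀ᵐ t ∂(volume.restrict (Set.Ioo (0 : ℝ) T)),
    MemLp (fun x => ub (x, t)) 6 (volume : Measure E3)
  /-- `ū ∈ L²(0,T; D^{1,2}_{0,σ})` (the gradient part) -/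
  gradL2 : (∫⁻ t in Set.Ioo (0 : ℝ) T,
      eLpNorm (fun x => gub (x, t)) 2 (volume : Measure E3) ^ (2 : ℝ)) < ⊤
  /-- `P⊥ū ∈ L^∞(0,T; L²(ℝ³))` -/
  perpL2 : ∃ M : ℝ≥0∞, M < ⊤ ∧ ∀ᵐ t ∂(volume.restrict (Set.Ioo (0 : ℝ) T)),
    eLpNorm (fun x => ub (x, t) - timeAvg T ub x) 2 (volume : Measure E3) ≤ M
  /-- the weak formulation, tested with periodic test fields -/
  weakform : ∀ Φ : ST3 → E3, PeriodicTestV T Φ →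
    ∫ p in PerSet T, (- (∑ i, ub p i * ddt (fun z => Φ z i) p)
        + (∑ i, ∑ j, gub p i j * ddx j (fun z => Φ z i) p)
        - lam * ∑ i, gub p i 0 * Φ p i
        + ∑ i, (∑ j, ub p j * gub p i j) * Φ p i)
      = ∫ p in PerSet T, ∑ i, f p i * Φ p i
  /-- the energy inequality -/
  energyineq : ∫ p in PerSet T, (∑ i, ∑ j, (gub p i j) ^ 2)
      ≤ ∫ p in PerSet T, ∑ i, f p i * ub p i

/-- the energy equality `∫₀ᵀ∫|∇u|² = ∫₀ᵀ∫ f·u` -/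
def EnergyEq (T : ℝ) (f : ST3 → E3) (gu : ST3 → Fin 3 → Fin 3 → ℝ) (u : ST3 → E3) : Prop :=
  ∫ p in PerSet T, (∑ i, ∑ j, (gu p i j) ^ 2) = ∫ p in PerSet T, ∑ i, f p i * u p i


/-- directional derivative of a complex-valued function on space-time -/
def ddC (v : ST3) (f : ST3 → ℂ) : ST3 → ℂ := fun p => fderiv ℝ f p v

/-- the iterated derivative `∂_{ξ₁}^{ε₁}∂_{ξ₂}^{ε₂}∂_{ξ₃}^{ε₃}∂_η^{ε₄}` -/
def MDer (ε : Fin 4 → ℕ) (f : ST3 → ℂ) : ST3 → ℂ :=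
  (ddC (e3 0, 0))^[ε 0] <| (ddC (e3 1, 0))^[ε 1] <| (ddC (e3 2, 0))^[ε 2] <|
    (ddC (0, 1))^[ε 3] f

/-- the multiplier `m_l(ξ,η) = (1−χ(η/ω))(iη)^{1/2}ξ_l / (|ξ|²+iη)` -/
def ml (ω : ℝ) (χ : ℝ → ℝ) (l : Fin 3) : ST3 → ℂ := fun p =>
  (((1 - χ (p.2 / ω) : ℝ) : ℂ) * (Complex.I * (p.2 : ℂ)) ^ ((1 : ℂ) / 2) * ((p.1 l : ℝ) : ℂ))
    / (((∑ i, (p.1 i) ^ 2 : ℝ) : ℂ) + Complex.I * (p.2 : ℂ))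

/-!
With `M = |ξ|² + |η|`, call `f` a symbol of parabolic order `d` on `{|η| > c}` when
`|ξ^α η^k ∂_ξ^α ∂_η^k f| ≤ C M^{d/2}` there for the multi-indices of the Marcinkiewicz condition.
Orders add under products, because the monomial weight splits along the Leibniz rule together with
the derivatives, and an inverse of a symbol of order `d` bounded below by `M^{d/2}` has order `-d`,
by differentiating `f * f⁻¹ = 1`. The cut-off `1 - χ(η/ω)` has order `0`, `(iη)^{1/2}` and `ξ_l`
have order `1`, and `|ξ|² + iη` has order `2` with `M ≤ 2 ‖|ξ|² + iη‖`; hence `m_l` has order `0`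
on `{|η| > ω/4}`, which is the Marcinkiewicz bound there. On `{|η| < ω/2}` the cut-off, and
with it `m_l`, vanishes identically.
-/

open Asymptotics Filter

section DerivAlong

variable {E ι : Type*} [NormedAddCommGroup E] [NormedSpace ℝ E]

/-- `derivAlong v [j₁, …, jₙ] f = ∂_{v j₁} ⋯ ∂_{v jₙ} f`, the innermost derivative last. -/
def derivAlong (v : ι → E) (l : List ι) (f : E → ℂ) : E → ℂ :=
  l.foldr (fun j g x => fderiv ℝ g x (v j)) f

variable (v : ι → E) {s : Set E} {f g : E → ℂ}

@[simp] lemma derivAlong_nil (f : E → ℂ) : derivAlong v [] f = f := rfl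

@[simp] lemma derivAlong_cons (j : ι) (l : List ι) (f : E → ℂ) (x : E) :
    derivAlong v (j :: l) f x = fderiv ℝ (derivAlong v l f) x (v j) := rfl

lemma derivAlong_append (l₁ l₂ : List ι) (f : E → ℂ) :
    derivAlong v (l₁ ++ l₂) f = derivAlong v l₁ (derivAlong v l₂ f) := by
  simp [derivAlong, List.foldr_append]

lemma derivAlong_replicate (n : ℕ) (j : ι) (f : E → ℂ) :
    derivAlong v (List.replicate n j) f = (fun g x => fderiv ℝ g x (v j))^[n] f := by
  induction n with
  | zero => rfl
  | succ n ih => rw [List.replicate_succ, Function.iterate_succ_apply', ← ih]; rfl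

lemma derivAlong_const_of_ne_nil {l : List ι} (hl : l ≠ []) (k : ℂ) :
    derivAlong v l (fun _ => k) = 0 := by
  induction l with
  | nil => exact absurd rfl hl
  | cons j l ih =>
    rcases eq_or_ne l [] with rfl | hl'
    · ext x; simp
    · ext x; simp [ih hl', Pi.zero_def]

lemma derivAlong_zero (l : List ι) : derivAlong v l 0 = 0 := by
  rcases eq_or_ne l [] with rfl | hl
  · rfl
  · exact derivAlong_const_of_ne_nil v hl 0

lemma derivAlong_congr (hs : IsOpen s) (h : s.EqOn f g) (l : List ι) :
    s.EqOn (derivAlong v l f) (derivAlong v l g) := by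
  induction l with
  | nil => exact h
  | cons j l ih =>
    intro x hx
    simp only [derivAlong_cons, (eventuallyEq_of_mem (hs.mem_nhds hx) ih).fderiv_eq]

lemma contDiffOn_derivAlong (hs : IsOpen s) (hf : ContDiffOn ℝ (⊤ : ℕ∞) f s) (l : List ι) :
    ContDiffOn ℝ (⊤ : ℕ∞) (derivAlong v l f) s := by
  induction l with
  | nil => exact hf
  | cons j l ih => exact (ih.fderiv_of_isOpen hs le_rfl).clm_apply contDiffOn_const

lemma differentiableAt_derivAlong (hs : IsOpen s) (hf : ContDiffOn ℝ (⊤ : ℕ∞) f s)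
    (l : List ι) {x : E} (hx : x ∈ s) : DifferentiableAt ℝ (derivAlong v l f) x :=
  ((contDiffOn_derivAlong v hs hf l).contDiffAt (hs.mem_nhds hx)).differentiableAt (by simp)

lemma derivAlong_add (hs : IsOpen s) (hf : ContDiffOn ℝ (⊤ : ℕ∞) f s)
    (hg : ContDiffOn ℝ (⊤ : ℕ∞) g s) (l : List ι) {x : E} (hx : x ∈ s) :
    derivAlong v l (fun y => f y + g y) x = derivAlong v l f x + derivAlong v l g x := by
  induction l generalizing x with
  | nil => rfl
  | cons j l ih =>
    have h : derivAlong v l (fun y => f y + g y) =ᶠ[nhds x]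
        fun y => derivAlong v l f y + derivAlong v l g y :=
      eventuallyEq_of_mem (hs.mem_nhds hx) fun y hy => ih hy
    simp only [derivAlong_cons, h.fderiv_eq, add_apply,
      fderiv_fun_add (differentiableAt_derivAlong v hs hf l hx)
        (differentiableAt_derivAlong v hs hg l hx)]

lemma derivAlong_const_mul (hs : IsOpen s) (hf : ContDiffOn ℝ (⊤ : ℕ∞) f s) (k : ℂ)
    (l : List ι) {x : E} (hx : x ∈ s) :
    derivAlong v l (fun y => k * f y) x = k * derivAlong v l f x := by
  induction l generalizing x with
  | nil => rfl
  | cons j l ih =>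
    have h : derivAlong v l (fun y => k * f y) =ᶠ[nhds x] fun y => k * derivAlong v l f y :=
      eventuallyEq_of_mem (hs.mem_nhds hx) fun y hy => ih hy
    simp only [derivAlong_cons, h.fderiv_eq, smul_apply, smul_eq_mul,
      fderiv_const_mul (differentiableAt_derivAlong v hs hf l hx)]

lemma fderiv_list_sum_apply {β : Type*} (L : List β) {F : β → E → ℂ} {x : E}
    (h : ∀ b, DifferentiableAt ℝ (F b) x) (w : E) :
    fderiv ℝ (fun y => (L.map fun b => F b y).sum) x w =
      (L.map fun b => fderiv ℝ (F b) x w).sum := by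
  have hL : HasFDerivAt (fun y => (L.map fun b => F b y).sum)
      (L.map fun b => fderiv ℝ (F b) x).sum x := by
    induction L with
    | nil => simpa using hasFDerivAt_const (0 : ℂ) x
    | cons b L ih => simpa using (h b).hasFDerivAt.fun_add ih
  rw [hL.fderiv]
  exact (map_list_sum (ContinuousLinearMap.apply ℝ ℂ w) _).trans (by rw [List.map_map]; rfl)

/-- The index set of the Leibniz rule: all ways of distributing the entries of a list between
two sublists. -/
def splits {α : Type*} : List α → List (List α × List α)
  | [] => [([], [])]
  | a :: l => (splits l).flatMap fun st => [(st.1, a :: st.2), (a :: st.1, st.2)]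

lemma sublist_and_perm_of_mem_splits {α : Type*} {l : List α} {st : List α × List α}
    (h : st ∈ splits l) : st.1.Sublist l ∧ st.2.Sublist l ∧ (st.1 ++ st.2).Perm l := by
  induction l generalizing st with
  | nil => simp_all [splits]
  | cons a l ih =>
    simp only [splits, List.mem_flatMap, List.mem_cons, List.not_mem_nil, or_false] at h
    obtain ⟨⟨s, t⟩, hmem, rfl | rfl⟩ := h
    all_goals obtain ⟨hs, ht, hp⟩ := ih hmem
    · exact ⟨hs.cons _, ht.cons_cons _, List.perm_middle.trans (hp.cons a)⟩
    · exact ⟨hs.cons_cons _, ht.cons _, hp.cons a⟩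

lemma splits_eq_cons {α : Type*} (l : List α) :
    ∃ rest, splits l = ([], l) :: rest ∧ ∀ st ∈ rest, st.1 ≠ [] := by
  induction l with
  | nil => exact ⟨[], rfl, by simp⟩
  | cons a l ih =>
    obtain ⟨rest, heq, hne⟩ := ih
    refine ⟨([a], l) :: rest.flatMap fun st => [(st.1, a :: st.2), (a :: st.1, st.2)], ?_, ?_⟩
    · simp [splits, heq]
    · simp only [List.mem_cons, List.mem_flatMap, List.not_mem_nil, or_false]
      rintro st (rfl | ⟨st', hst', rfl | rfl⟩)
      exacts [List.cons_ne_nil _ _, hne st' hst', List.cons_ne_nil _ _]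

lemma derivAlong_mul (hs : IsOpen s) (hf : ContDiffOn ℝ (⊤ : ℕ∞) f s)
    (hg : ContDiffOn ℝ (⊤ : ℕ∞) g s) (l : List ι) {x : E} (hx : x ∈ s) :
    derivAlong v l (fun y => f y * g y) x =
      ((splits l).map fun st => derivAlong v st.1 f x * derivAlong v st.2 g x).sum := by
  induction l generalizing x with
  | nil => simp [splits]
  | cons j l ih =>
    have hdiff : ∀ st : List ι × List ι, DifferentiableAt ℝ
        (fun y => derivAlong v st.1 f y * derivAlong v st.2 g y) x := fun st =>
      (differentiableAt_derivAlong v hs hf st.1 hx).mul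
        (differentiableAt_derivAlong v hs hg st.2 hx)
    have h : derivAlong v l (fun y => f y * g y) =ᶠ[nhds x]
        fun y => ((splits l).map fun st => derivAlong v st.1 f y * derivAlong v st.2 g y).sum :=
      eventuallyEq_of_mem (hs.mem_nhds hx) fun y hy => ih hy
    rw [derivAlong_cons, h.fderiv_eq, fderiv_list_sum_apply _ hdiff, splits]
    simp only [List.flatMap_def, List.map_flatten, List.sum_flatten, List.map_map,
      Function.comp_def]
    refine congrArg List.sum (List.map_congr_left fun st _ => ?_)
    simp only [fderiv_fun_mul (differentiableAt_derivAlong v hs hf st.1 hx)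
      (differentiableAt_derivAlong v hs hg st.2 hx), derivAlong_cons, add_apply, smul_apply,
      smul_eq_mul, List.map_cons, List.map_nil, List.sum_cons, List.sum_nil]
    ring

lemma derivAlong_clm (L : E →L[ℝ] ℂ) (j : ι) (l : List ι) :
    derivAlong v (j :: l) L = fun _ => if l = [] then L (v j) else 0 := by
  induction l generalizing j with
  | nil => ext x; simp [L.fderiv]
  | cons k l ih => ext x; rw [derivAlong_cons, ih k]; simp

lemma contDiffOn_iterate_deriv {O : Set ℝ} (hO : IsOpen O) {h : ℝ → ℂ}
    (hh : ContDiffOn ℝ (⊤ : ℕ∞) h O) (n : ℕ) : ContDiffOn ℝ (⊤ : ℕ∞) (deriv^[n] h) O := by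
  induction n with
  | zero => exact hh
  | succ n ih =>
    rw [Function.iterate_succ_apply']
    exact ih.deriv_of_isOpen hO le_rfl

lemma derivAlong_comp_snd (w : ι → E × ℝ) {O : Set ℝ} (hO : IsOpen O) {h : ℝ → ℂ}
    (hh : ContDiffOn ℝ (⊤ : ℕ∞) h O) (l : List ι) {x : E × ℝ} (hx : x.2 ∈ O) :
    derivAlong w l (fun y => h y.2) x =
      (l.map fun j => ((w j).2 : ℂ)).prod * deriv^[l.length] h x.2 := by
  induction l generalizing x with
  | nil => simp
  | cons j l ih =>
    have hloc : derivAlong w l (fun y => h y.2) =ᶠ[nhds x]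
        fun y => (l.map fun j => ((w j).2 : ℂ)).prod * deriv^[l.length] h y.2 :=
      eventuallyEq_of_mem ((hO.preimage continuous_snd).mem_nhds hx) fun y hy => ih hy
    have hd : HasDerivAt (deriv^[l.length] h) (deriv^[l.length + 1] h x.2) x.2 := by
      rw [Function.iterate_succ_apply']
      exact (((contDiffOn_iterate_deriv hO hh _).contDiffAt (hO.mem_nhds hx)).differentiableAt
        (by simp)).hasDerivAt
    have hF : HasFDerivAt (fun y : E × ℝ =>
        (l.map fun j => ((w j).2 : ℂ)).prod * deriv^[l.length] h y.2) _ x :=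
      (hd.hasFDerivAt.comp x (ContinuousLinearMap.snd ℝ E ℝ).hasFDerivAt).const_mul _
    rw [derivAlong_cons, hloc.fderiv_eq, hF.fderiv]
    simp only [Function.iterate_succ, Function.comp_apply, smul_apply,
      ContinuousLinearMap.comp_apply, ContinuousLinearMap.coe_snd',
      ContinuousLinearMap.toSpanSingleton_apply, Complex.real_smul, smul_eq_mul, List.map_cons,
      List.prod_cons, List.length_cons]
    ring

end DerivAlong

lemma Asymptotics.IsBigO.list_sum {α β E F : Type*} [SeminormedAddCommGroup E] [Norm F]
    {l : Filter α} {L : List β} {f : β → α → E} {g : α → F} (h : ∀ b ∈ L, f b =O[l] g) :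
    (fun x => (L.map fun b => f b x).sum) =O[l] g := by
  induction L with
  | nil => simpa using isBigO_zero g l
  | cons b L ih =>
    simpa using (h b (by simp)).add (ih fun b hb => h b (List.mem_cons_of_mem _ hb))

namespace ParabolicSymbol

def coord : Fin 4 → ST3 →L[ℝ] ℝ :=
  ![(ContinuousLinearMap.proj 0).comp (ContinuousLinearMap.fst ℝ E3 ℝ),
    (ContinuousLinearMap.proj 1).comp (ContinuousLinearMap.fst ℝ E3 ℝ),
    (ContinuousLinearMap.proj 2).comp (ContinuousLinearMap.fst ℝ E3 ℝ),
    ContinuousLinearMap.snd ℝ E3 ℝ]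

@[simp] lemma coord_castSucc (i : Fin 3) (p : ST3) : coord i.castSucc p = p.1 i := by
  fin_cases i <;> rfl

@[simp] lemma coord_three (p : ST3) : coord 3 p = p.2 := rfl

def dir : Fin 4 → ST3 := ![(e3 0, 0), (e3 1, 0), (e3 2, 0), (0, 1)]

lemma coord_dir (j k : Fin 4) : coord k (dir j) = if j = k then 1 else 0 := by
  fin_cases j <;> fin_cases k <;> simp [coord, dir, e3]

lemma eq_three_of_dir_snd_ne_zero {j : Fin 4} (h : (dir j).2 ≠ 0) : j = 3 := by
  fin_cases j <;> simp_all [dir]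

def monomial (l : List (Fin 4)) (p : ST3) : ℝ := (l.map fun j => coord j p).prod

@[simp] lemma monomial_nil (p : ST3) : monomial [] p = 1 := rfl

lemma monomial_eq_mul_of_perm {s t l : List (Fin 4)} (h : (s ++ t).Perm l) (p : ST3) :
    monomial l p = monomial s p * monomial t p := by
  rw [monomial, ← (h.map _).prod_eq, List.map_append, List.prod_append, monomial, monomial]

def size (p : ST3) : ℝ := ∑ i, p.1 i ^ 2 + |p.2|

def offSlab (c : ℝ) : Set ST3 := {p | c < |p.2|}

lemma isOpen_offSlab (c : ℝ) : IsOpen (offSlab c) :=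
  isOpen_lt continuous_const (continuous_abs.comp continuous_snd)

lemma abs_snd_le_size (p : ST3) : |p.2| ≤ size p :=
  le_add_of_nonneg_left (Finset.sum_nonneg fun _ _ => sq_nonneg _)

lemma size_pos {c : ℝ} (hc : 0 ≤ c) {p : ST3} (hp : p ∈ offSlab c) : 0 < size p :=
  (hc.trans_lt hp).trans_le (abs_snd_le_size p)

lemma isBigO_mul_size_rpow {c a b : ℝ} (hc : 0 ≤ c) {A B : ST3 → ℂ}
    (hA : A =O[𝓟 (offSlab c)] fun p => size p ^ (a / 2))
    (hB : B =O[𝓟 (offSlab c)] fun p => size p ^ (b / 2)) :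
    (fun p => A p * B p) =O[𝓟 (offSlab c)] fun p => size p ^ ((a + b) / 2) :=
  (hA.mul hB).congr' EventuallyEq.rfl <| eventuallyEq_principal.2 fun p hp => by
    rw [add_div, Real.rpow_add (size_pos hc hp)]

structure IsSymbol (c d : ℝ) (f : ST3 → ℂ) : Prop where
  contDiffOn : ContDiffOn ℝ (⊤ : ℕ∞) f (offSlab c)
  isBigO : ∀ l : List (Fin 4), l.Sublist [0, 1, 2, 3] →
    (fun p => (monomial l p : ℂ) * derivAlong dir l f p) =O[𝓟 (offSlab c)]
      fun p => size p ^ (d / 2)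

variable {c d e : ℝ} {f g : ST3 → ℂ}

theorem IsSymbol.add (hf : IsSymbol c d f) (hg : IsSymbol c d g) :
    IsSymbol c d fun p => f p + g p := by
  refine ⟨hf.contDiffOn.add hg.contDiffOn, fun l hl => ?_⟩
  refine ((hf.isBigO l hl).add (hg.isBigO l hl)).congr'
    (eventuallyEq_principal.2 fun p hp => ?_) EventuallyEq.rfl
  rw [derivAlong_add dir (isOpen_offSlab c) hf.contDiffOn hg.contDiffOn l hp, mul_add]

theorem IsSymbol.const_mul (hf : IsSymbol c d f) (k : ℂ) : IsSymbol c d fun p => k * f p := by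
  refine ⟨contDiffOn_const.mul hf.contDiffOn, fun l hl => ?_⟩
  refine ((hf.isBigO l hl).const_mul_left k).congr'
    (eventuallyEq_principal.2 fun p hp => ?_) EventuallyEq.rfl
  rw [derivAlong_const_mul dir (isOpen_offSlab c) hf.contDiffOn k l hp]
  ring

lemma monomial_mul_derivAlong_mul (hf : ContDiffOn ℝ (⊤ : ℕ∞) f (offSlab c))
    (hg : ContDiffOn ℝ (⊤ : ℕ∞) g (offSlab c)) (l : List (Fin 4)) {p : ST3}
    (hp : p ∈ offSlab c) :
    (monomial l p : ℂ) * derivAlong dir l (fun q => f q * g q) p =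
      ((splits l).map fun st => ((monomial st.1 p : ℂ) * derivAlong dir st.1 f p) *
        ((monomial st.2 p : ℂ) * derivAlong dir st.2 g p)).sum := by
  rw [derivAlong_mul dir (isOpen_offSlab c) hf hg l hp, ← List.sum_map_mul_left]
  refine congrArg List.sum (List.map_congr_left fun st hst => ?_)
  rw [monomial_eq_mul_of_perm (sublist_and_perm_of_mem_splits hst).2.2 p]
  push_cast
  ring

theorem IsSymbol.mul (hc : 0 ≤ c) (hf : IsSymbol c d f) (hg : IsSymbol c e g) :
    IsSymbol c (d + e) fun p => f p * g p := by
  refine ⟨hf.contDiffOn.mul hg.contDiffOn, fun l hl => ?_⟩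
  refine (IsBigO.list_sum fun st hst => ?_).congr'
    (eventuallyEq_principal.2 fun p hp =>
      (monomial_mul_derivAlong_mul hf.contDiffOn hg.contDiffOn l hp).symm)
    EventuallyEq.rfl
  obtain ⟨hs, ht, -⟩ := sublist_and_perm_of_mem_splits hst
  exact isBigO_mul_size_rpow hc (hf.isBigO _ (hs.trans hl)) (hg.isBigO _ (ht.trans hl))

/-- Differentiate `f * f⁻¹ = 1` by the Leibniz rule. -/
lemma monomial_mul_derivAlong_inv (hf : ContDiffOn ℝ (⊤ : ℕ∞) f (offSlab c))
    (hne : ∀ p ∈ offSlab c, f p ≠ 0) {l : List (Fin 4)} (hl : l ≠ [])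
    {rest : List (List (Fin 4) × List (Fin 4))} (hrest : splits l = ([], l) :: rest)
    {p : ST3} (hp : p ∈ offSlab c) :
    (monomial l p : ℂ) * derivAlong dir l (fun q => (f q)⁻¹) p =
      -((f p)⁻¹ * (rest.map fun st => ((monomial st.1 p : ℂ) * derivAlong dir st.1 f p) *
        ((monomial st.2 p : ℂ) * derivAlong dir st.2 (fun q => (f q)⁻¹) p)).sum) := by
  have hone : derivAlong dir l (fun q => f q * (f q)⁻¹) p = 0 := by
    rw [derivAlong_congr dir (isOpen_offSlab c) (fun q hq => mul_inv_cancel₀ (hne q hq)) l hp,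
      derivAlong_const_of_ne_nil dir hl, Pi.zero_apply]
  have h := monomial_mul_derivAlong_mul (g := fun q => (f q)⁻¹) hf (hf.inv hne) l hp
  rw [hone, mul_zero, hrest, List.map_cons, List.sum_cons] at h
  simp only [monomial_nil, Complex.ofReal_one, one_mul, derivAlong_nil] at h
  rw [← mul_right_inj' (hne p hp), mul_neg, mul_inv_cancel_left₀ (hne p hp)]
  linear_combination -h

theorem IsSymbol.inv (hc : 0 ≤ c) (hf : IsSymbol c d f)
    (hlow : (fun p => size p ^ (d / 2)) =O[𝓟 (offSlab c)] f) :
    IsSymbol c (-d) fun p => (f p)⁻¹ := by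
  have hpos : ∀ p ∈ offSlab c, 0 < size p ^ (d / 2) := fun p hp =>
    Real.rpow_pos_of_pos (size_pos hc hp) _
  have hne : ∀ p ∈ offSlab c, f p ≠ 0 := by
    obtain ⟨C, hC⟩ := isBigO_principal.1 hlow
    intro p hp h0
    have := hC p hp
    rw [h0, norm_zero, mul_zero, Real.norm_eq_abs, abs_of_pos (hpos p hp)] at this
    exact (hpos p hp).not_ge this
  have hinv : (fun p => (f p)⁻¹) =O[𝓟 (offSlab c)] fun p => size p ^ (-d / 2) :=
    (hlow.inv_rev (eventually_principal.2 fun p hp h0 => absurd h0 (hpos p hp).ne')).congr'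
      EventuallyEq.rfl <| eventuallyEq_principal.2 fun p hp => by
        rw [neg_div, Real.rpow_neg (size_pos hc hp).le]
  refine ⟨hf.contDiffOn.inv hne, fun l hl => ?_⟩
  induction hn : l.length using Nat.strong_induction_on generalizing l with
  | _ n ih =>
    rcases eq_or_ne l [] with rfl | hl0
    · simpa using hinv
    obtain ⟨rest, hrest, hrest_ne⟩ := splits_eq_cons l
    have hterm : ∀ st ∈ rest, (fun p => ((monomial st.1 p : ℂ) * derivAlong dir st.1 f p) *
        ((monomial st.2 p : ℂ) * derivAlong dir st.2 (fun q => (f q)⁻¹) p)) =O[𝓟 (offSlab c)]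
          fun p => size p ^ ((d + -d) / 2) := by
      intro st hst
      obtain ⟨hs, ht, hperm⟩ :=
        sublist_and_perm_of_mem_splits (hrest ▸ List.mem_cons_of_mem _ hst)
      have hlen : st.2.length < n := by
        have hsum := hperm.length_eq
        have hpos := List.length_pos_iff.2 (hrest_ne st hst)
        rw [List.length_append] at hsum
        omega
      exact isBigO_mul_size_rpow hc (hf.isBigO _ (hs.trans hl)) (ih _ hlen _ (ht.trans hl) rfl)
    refine (isBigO_mul_size_rpow hc hinv (IsBigO.list_sum hterm)).neg_left.congr'
      (eventuallyEq_principal.2 fun p hp =>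
        (monomial_mul_derivAlong_inv hf.contDiffOn hne hl0 hrest hp).symm)
      (eventuallyEq_principal.2 fun p _ => by ring_nf)

lemma isSymbol_coord (k : Fin 4) (hk : ∀ p, |coord k p| ≤ size p ^ (d / 2)) :
    IsSymbol c d fun p => (coord k p : ℂ) := by
  have hbound : (fun p => (coord k p : ℂ)) =O[𝓟 (offSlab c)] fun p => size p ^ (d / 2) :=
    isBigO_of_le _ fun p => by
      rw [Complex.norm_real, Real.norm_eq_abs]
      exact (hk p).trans (le_abs_self _)
  refine ⟨(Complex.ofRealCLM.comp (coord k)).contDiff.contDiffOn, fun l _ => ?_⟩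
  rcases l with _ | ⟨j, l⟩
  · simpa using hbound
  have hL := derivAlong_clm dir (Complex.ofRealCLM.comp (coord k)) j l
  simp only [ContinuousLinearMap.comp_apply, Complex.ofRealCLM_apply, coord_dir] at hL
  rw [show (fun p => (coord k p : ℂ)) = ⇑(Complex.ofRealCLM.comp (coord k)) from rfl, hL]
  rcases eq_or_ne l [] with rfl | hl
  · by_cases hjk : j = k
    · subst hjk
      simpa [monomial] using hbound
    · simpa [hjk] using isBigO_zero _ _
  · simpa [hl] using isBigO_zero _ _

lemma isSymbol_xi (i : Fin 3) : IsSymbol c 1 fun p => ((p.1 i : ℝ) : ℂ) := by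
  simp_rw [← coord_castSucc]
  refine isSymbol_coord i.castSucc fun p => ?_
  rw [coord_castSucc, ← Real.sqrt_eq_rpow, ← Real.sqrt_sq_eq_abs]
  exact Real.sqrt_le_sqrt ((Finset.single_le_sum (fun j _ => sq_nonneg (p.1 j))
    (Finset.mem_univ i)).trans (le_add_of_nonneg_right (abs_nonneg p.2)))

lemma isSymbol_eta : IsSymbol c 2 fun p => ((p.2 : ℝ) : ℂ) :=
  isSymbol_coord 3 fun p => by simpa using abs_snd_le_size p

lemma isBigO_comp_snd (hd : 0 ≤ d) {F : ℝ → ℂ}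
    (hF : F =O[𝓟 {t | c < |t|}] fun t => |t| ^ (d / 2)) :
    (fun p : ST3 => F p.2) =O[𝓟 (offSlab c)] fun p => size p ^ (d / 2) :=
  (hF.comp_tendsto (k := Prod.snd) (tendsto_principal_principal.2 fun _ hp => hp)).trans_le
    fun p => by
      rw [Function.comp_apply, Real.norm_of_nonneg (by positivity),
        Real.norm_of_nonneg (Real.rpow_nonneg ((abs_nonneg _).trans (abs_snd_le_size p)) _)]
      exact Real.rpow_le_rpow (abs_nonneg p.2) (abs_snd_le_size p) (by positivity)

/-- Along the directions of the Marcinkiewicz condition, a function of `η` has only the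
derivatives `h` and `∂_η h`. -/
theorem isSymbol_comp_snd (hd : 0 ≤ d) {h : ℝ → ℂ}
    (hh : ContDiffOn ℝ (⊤ : ℕ∞) h {t | c < |t|})
    (h₀ : h =O[𝓟 {t | c < |t|}] fun t => |t| ^ (d / 2))
    (h₁ : (fun t => t * deriv h t) =O[𝓟 {t | c < |t|}] fun t => |t| ^ (d / 2)) :
    IsSymbol c d fun p => h p.2 := by
  have hO : IsOpen {t : ℝ | c < |t|} := isOpen_lt continuous_const continuous_abs
  refine ⟨hh.comp contDiffOn_snd fun _ hp => hp, fun l hl => ?_⟩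
  refine IsBigO.congr' ?_ (eventuallyEq_principal.2 fun p hp => by
    rw [derivAlong_comp_snd dir hO hh l hp]).symm EventuallyEq.rfl
  by_cases hz : (l.map fun j => ((dir j).2 : ℂ)).prod = 0
  · simpa [hz] using isBigO_zero _ _
  have hl3 : l.Sublist [3] := by
    have : l.filter (· = 3) = l := List.filter_eq_self.2 fun j hj => by
      simpa using eq_three_of_dir_snd_ne_zero fun h' =>
        hz (List.prod_eq_zero (List.mem_map.2 ⟨j, hj, by simp [h']⟩))
    rw [← this]
    exact hl.filter _
  rcases List.sublist_singleton.1 hl3 with rfl | rfl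
  · simpa using isBigO_comp_snd hd h₀
  · simpa [monomial, dir] using isBigO_comp_snd hd h₁

lemma I_mul_ofReal_mem_slitPlane {t : ℝ} (ht : t ≠ 0) : Complex.I * t ∈ Complex.slitPlane := by
  rw [Complex.mem_slitPlane_iff]
  right
  simpa using ht

lemma norm_I_mul_ofReal_cpow (t s : ℝ) : ‖(Complex.I * t) ^ (s : ℂ)‖ = |t| ^ s := by
  rw [Complex.norm_cpow_real, norm_mul, Complex.norm_I, one_mul, Complex.norm_real,
    Real.norm_eq_abs]

lemma hasDerivAt_I_mul_ofReal_cpow {t : ℝ} (ht : t ≠ 0) (a : ℂ) :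
    HasDerivAt (fun s : ℝ => (Complex.I * s) ^ a)
      (a * (Complex.I * t) ^ (a - 1) * Complex.I) t := by
  have hin : HasDerivAt (fun s : ℝ => Complex.I * s) Complex.I t := by
    simpa using (Complex.ofRealCLM.hasDerivAt (x := t)).const_mul Complex.I
  exact (Complex.hasStrictDerivAt_cpow_const (I_mul_ofReal_mem_slitPlane ht)).hasDerivAt.comp t hin

theorem isSymbol_sqrt (hc : 0 ≤ c) :
    IsSymbol c 1 fun p => (Complex.I * (p.2 : ℂ)) ^ ((1 : ℂ) / 2) := by
  have hne : ∀ t : ℝ, c < |t| → t ≠ 0 := fun t ht h0 => by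
    rw [h0, abs_zero] at ht
    exact ht.not_ge hc
  have hhalf : (1 : ℂ) / 2 = ((1 / 2 : ℝ) : ℂ) := by push_cast; ring
  refine isSymbol_comp_snd (h := fun t : ℝ => (Complex.I * t) ^ ((1 : ℂ) / 2)) zero_le_one
    (fun t ht => ?_) ?_ ?_
  · have hana : AnalyticAt ℂ (fun z : ℂ => z ^ ((1 : ℂ) / 2)) (Complex.I * t) :=
      analyticAt_id.cpow analyticAt_const (I_mul_ofReal_mem_slitPlane (hne t ht))
    exact (hana.contDiffAt.restrict_scalars ℝ |>.comp t
      (contDiff_const.mul Complex.ofRealCLM.contDiff).contDiffAt).contDiffWithinAt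
  · refine isBigO_of_le _ fun t => ?_
    rw [hhalf, norm_I_mul_ofReal_cpow, Real.norm_of_nonneg (by positivity)]
  · refine IsBigO.of_bound (1 / 2) (eventually_principal.2 fun t ht => ?_)
    have htpos : 0 < |t| := abs_pos.2 (hne t ht)
    have hexp : (1 : ℂ) / 2 - 1 = ((-1 / 2 : ℝ) : ℂ) := by push_cast; ring
    rw [(hasDerivAt_I_mul_ofReal_cpow (hne t ht) _).deriv, hexp]
    simp only [norm_mul, norm_I_mul_ofReal_cpow, Complex.norm_real, Complex.norm_I,
      Real.norm_eq_abs, norm_div, norm_one, Complex.norm_ofNat,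
      abs_of_nonneg (Real.rpow_nonneg (abs_nonneg t) _)]
    refine le_of_eq ?_
    calc |t| * (1 / 2 * |t| ^ (-1 / 2 : ℝ) * 1)
        = 1 / 2 * (|t| ^ (1 : ℝ) * |t| ^ (-1 / 2 : ℝ)) := by rw [Real.rpow_one]; ring
      _ = 1 / 2 * |t| ^ (1 / 2 : ℝ) := by rw [← Real.rpow_add htpos]; norm_num

theorem isSymbol_cutoff {ω : ℝ} {χ : ℝ → ℝ} (hχ : ContDiff ℝ (⊤ : ℕ∞) χ)
    (hχc : HasCompactSupport χ) : IsSymbol c 0 fun p => ((1 - χ (p.2 / ω) : ℝ) : ℂ) := by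
  obtain ⟨K₀, hK₀⟩ := hχc.exists_bound_of_continuous hχ.continuous
  obtain ⟨K₁, hK₁⟩ := (hχc.deriv.mul_left (f := id)).exists_bound_of_continuous
    (continuous_id.mul (hχ.continuous_deriv (by simp)))
  have hderiv : ∀ t : ℝ, HasDerivAt (fun s : ℝ => ((1 - χ (s / ω) : ℝ) : ℂ))
      ((-(deriv χ (t / ω) * ω⁻¹) : ℝ) : ℂ) t := fun t =>
    (((hχ.differentiable (by simp) (t / ω)).hasDerivAt.comp t
      ((hasDerivAt_id t).div_const ω)).const_sub 1).ofReal_comp.congr_deriv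
        (by simp [div_eq_mul_inv])
  refine isSymbol_comp_snd (h := fun t : ℝ => ((1 - χ (t / ω) : ℝ) : ℂ)) le_rfl
    (Complex.ofRealCLM.contDiff.comp (contDiff_const.sub (hχ.comp
      (contDiff_id.div_const ω)))).contDiffOn ?_ ?_
  · refine IsBigO.of_bound (1 + K₀) (Eventually.of_forall fun t => ?_)
    simp only [zero_div, Real.rpow_zero, norm_one, mul_one, Complex.norm_real]
    exact (norm_sub_le _ _).trans (by simpa using hK₀ (t / ω))
  · refine IsBigO.of_bound K₁ (Eventually.of_forall fun t => ?_)
    rw [(hderiv t).deriv]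
    simpa [div_eq_mul_inv, mul_comm, mul_left_comm] using hK₁ (t / ω)

theorem isSymbol_heat (hc : 0 ≤ c) :
    IsSymbol c 2 fun p => ((∑ i, p.1 i ^ 2 : ℝ) : ℂ) + Complex.I * (p.2 : ℂ) := by
  have hsq : ∀ i : Fin 3, IsSymbol c 2 fun p => ((p.1 i : ℝ) : ℂ) * ((p.1 i : ℝ) : ℂ) :=
    fun i => by simpa [one_add_one_eq_two] using (isSymbol_xi i).mul hc (isSymbol_xi i)
  convert (hsq 0).add ((hsq 1).add ((hsq 2).add (isSymbol_eta.const_mul Complex.I))) using 2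
    with p
  simp only [Fin.sum_univ_three]
  push_cast
  ring

lemma size_isBigO_heat (c : ℝ) :
    (fun p => size p ^ ((2 : ℝ) / 2)) =O[𝓟 (offSlab c)]
      fun p => ((∑ i, p.1 i ^ 2 : ℝ) : ℂ) + Complex.I * (p.2 : ℂ) := by
  refine IsBigO.of_bound 2 (Eventually.of_forall fun p => ?_)
  have key : ∀ s t : ℝ, s ≤ ‖(s : ℂ) + Complex.I * t‖ ∧ |t| ≤ ‖(s : ℂ) + Complex.I * t‖ :=
    fun s t => ⟨by simpa using Complex.re_le_norm ((s : ℂ) + Complex.I * t),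
      by simpa using Complex.abs_im_le_norm ((s : ℂ) + Complex.I * t)⟩
  obtain ⟨hre, him⟩ := key (∑ i, p.1 i ^ 2) p.2
  rw [div_self two_ne_zero, Real.rpow_one, Real.norm_of_nonneg
    ((abs_nonneg _).trans (abs_snd_le_size p)), size]
  linarith

theorem isSymbol_ml (hc : 0 ≤ c) {ω : ℝ} {χ : ℝ → ℝ} (hχ : ContDiff ℝ (⊤ : ℕ∞) χ)
    (hχc : HasCompactSupport χ) (l : Fin 3) : IsSymbol c 0 (ml ω χ l) := by
  have h := (isSymbol_cutoff (ω := ω) hχ hχc).mul hc <| (isSymbol_sqrt hc).mul hc <|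
    (isSymbol_xi l).mul hc <| (isSymbol_heat hc).inv hc (size_isBigO_heat c)
  convert h using 2
  · norm_num
  · simp only [ml, div_eq_mul_inv]
    ring

lemma IsSymbol.exists_bound (hf : IsSymbol c 0 f) : ∃ B, 0 ≤ B ∧
    ∀ l : List (Fin 4), l.Sublist [0, 1, 2, 3] → ∀ p ∈ offSlab c,
      ‖(monomial l p : ℂ) * derivAlong dir l f p‖ ≤ B := by
  have hfin : {l : List (Fin 4) | l.Sublist [0, 1, 2, 3]}.Finite :=
    [0, 1, 2, 3].sublists.finite_toSet.subset fun l hl => List.mem_sublists.2 hl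
  have hev : ∀ l ∈ {l : List (Fin 4) | l.Sublist [0, 1, 2, 3]}, ∀ᶠ B in atTop,
      ∀ p ∈ offSlab c, ‖(monomial l p : ℂ) * derivAlong dir l f p‖ ≤ B := fun l hl => by
    obtain ⟨C, hC⟩ := isBigO_principal.1 (hf.isBigO l hl)
    filter_upwards [eventually_ge_atTop C] with B hB p hp
    exact ((hC p hp).trans_eq (by simp)).trans hB
  obtain ⟨B, hB0, hB⟩ := ((eventually_ge_atTop 0).and ((eventually_all_finite hfin).2 hev)).exists
  exact ⟨B, hB0, fun l hl => hB l hl⟩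

theorem IsSymbol.contDiff_and_bound_of_eqOn_zero (hf : IsSymbol c 0 f) {V : Set ST3}
    (hV : IsOpen V) (hfV : V.EqOn f 0) (hcover : ∀ p, p ∈ offSlab c ∨ p ∈ V) :
    ContDiff ℝ (⊤ : ℕ∞) f ∧ ∃ B, ∀ l : List (Fin 4), l.Sublist [0, 1, 2, 3] → ∀ p,
      ‖(monomial l p : ℂ) * derivAlong dir l f p‖ ≤ B := by
  obtain ⟨B, hB0, hB⟩ := hf.exists_bound
  refine ⟨contDiff_iff_contDiffAt.2 fun p => ?_, B, fun l hl p => ?_⟩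
  · rcases hcover p with hp | hp
    · exact hf.contDiffOn.contDiffAt ((isOpen_offSlab c).mem_nhds hp)
    · exact contDiffAt_const.congr_of_eventuallyEq (eventuallyEq_of_mem (hV.mem_nhds hp) hfV)
  · rcases hcover p with hp | hp
    · exact hB l hl p hp
    · rw [derivAlong_congr dir hV hfV l hp, derivAlong_zero]
      simpa using hB0

def dirList (ε : Fin 4 → ℕ) : List (Fin 4) :=
  List.replicate (ε 0) 0 ++ List.replicate (ε 1) 1 ++ List.replicate (ε 2) 2 ++
    List.replicate (ε 3) 3

lemma MDer_eq_derivAlong (ε : Fin 4 → ℕ) (f : ST3 → ℂ) :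
    MDer ε f = derivAlong dir (dirList ε) f := by
  simp only [dirList, derivAlong_append, derivAlong_replicate]
  rfl

lemma monomial_dirList (ε : Fin 4 → ℕ) (p : ST3) :
    monomial (dirList ε) p = p.1 0 ^ ε 0 * p.1 1 ^ ε 1 * p.1 2 ^ ε 2 * p.2 ^ ε 3 := by
  simp [monomial, dirList, coord, mul_assoc]

lemma dirList_sublist {ε : Fin 4 → ℕ} (hε : ∀ i, ε i ≤ 1) :
    (dirList ε).Sublist [0, 1, 2, 3] := by
  have h : ∀ (j : Fin 4) (n : ℕ), n ≤ 1 → (List.replicate n j).Sublist [j] := fun j n hn => by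
    interval_cases n <;> simp
  exact (((h 0 _ (hε 0)).append (h 1 _ (hε 1))).append (h 2 _ (hε 2))).append (h 3 _ (hε 3))

end ParabolicSymbol

lemma ml_eqOn_zero {ω : ℝ} (hω : 0 < ω) {χ : ℝ → ℝ}
    (hχone : ∀ η : ℝ, |η| ≤ 1 / 2 → χ η = 1) (l : Fin 3) :
    {p : ST3 | |p.2| < ω / 2}.EqOn (ml ω χ l) 0 := fun p hp => by
  have h : χ (p.2 / ω) = 1 := hχone _ <| by
    rw [abs_div, abs_of_pos hω, div_le_iff₀ hω]
    exact (le_of_lt hp).trans_eq (by ring)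
  simp [ml, h]

open ParabolicSymbol in
theorem multiplier_Marcinkiewicz_general
    (ω : ℝ) (hω : 0 < ω) (χ : ℝ → ℝ)
    (hχsmooth : ContDiff ℝ (⊤ : ℕ∞) χ) (hχsupp : HasCompactSupport χ)
    (hχone : ∀ η : ℝ, |η| ≤ 1 / 2 → χ η = 1)
    (l : Fin 3) :
    ContDiff ℝ (⊤ : ℕ∞) (ml ω χ l) ∧
    (∃ B : ℝ, ∀ p : ST3, ‖ml ω χ l p‖ ≤ B) ∧
    (∃ B : ℝ, ∀ ε : Fin 4 → ℕ, (∀ i, ε i ≤ 1) → ∀ p : ST3,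
      ‖(((p.1 0) ^ (ε 0) * (p.1 1) ^ (ε 1) * (p.1 2) ^ (ε 2) * (p.2) ^ (ε 3) : ℝ) : ℂ)
          * MDer ε (ml ω χ l) p‖ ≤ B) := by
  have hcover : ∀ p : ST3, p ∈ offSlab (ω / 4) ∨ p ∈ {p : ST3 | |p.2| < ω / 2} := fun p => by
    by_cases h : |p.2| < ω / 2
    · exact Or.inr h
    · exact Or.inl (show ω / 4 < |p.2| by linarith)
  obtain ⟨hsmooth, B, hB⟩ :=
    (isSymbol_ml (by positivity) hχsmooth hχsupp l).contDiff_and_bound_of_eqOn_zero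
      (isOpen_lt (continuous_abs.comp continuous_snd) continuous_const)
      (ml_eqOn_zero hω hχone l) hcover
  refine ⟨hsmooth, ⟨B, fun p => by simpa using hB [] (List.nil_sublist _) p⟩, B,
    fun ε hε p => ?_⟩
  rw [MDer_eq_derivAlong, ← monomial_dirList]
  exact hB _ (dirList_sublist hε) p

/-- The multiplier `m_l` is smooth, bounded and satisfies the Marcinkiewicz condition
(from the proof of Theorem 4.17 / `ss_RegularityThm`). -/
theorem multiplier_Marcinkiewicz
    (ω : ℝ) (hω : 0 < ω) (χ : ℝ → ℝ)
    (hχsmooth : ContDiff ℝ (⊤ : ℕ∞) χ) (hχsupp : HasCompactSupport χ)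
    (hχone : ∀ η : ℝ, |η| ≤ 1 / 2 → χ η = 1)
    (hχzero : ∀ η : ℝ, 1 ≤ |η| → χ η = 0)
    (l : Fin 3) :
    ContDiff ℝ (⊤ : ℕ∞) (ml ω χ l) ∧
    (∃ B : ℝ, ∀ p : ST3, ‖ml ω χ l p‖ ≤ B) ∧
    (∃ B : ℝ, ∀ ε : Fin 4 → ℕ, (∀ i, ε i ≤ 1) → ∀ p : ST3,
      ‖(((p.1 0) ^ (ε 0) * (p.1 1) ^ (ε 1) * (p.1 2) ^ (ε 2) * (p.2) ^ (ε 3) : ℝ) : ℂ)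
          * MDer ε (ml ω χ l) p‖ ≤ B) :=
  multiplier_Marcinkiewicz_general ω hω χ hχsmooth hχsupp hχone l

end
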